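/- Let f_4 be the Musin polynomial of degree 9 (for n = 4). For any finite set X = {x_1,...,x_M} of points on the unit sphere S³ ⊂ ℝ⁴, the sum S(X) = ∑_{i=1}^M ∑_{j=1}^M f_4(⟨x_i, x_j⟩) satisfies S(X) ≥ M². -/

import Mathlib

/-!
For `n = 4` the Gegenbauer polynomials are the Chebyshev polynomials of the second kind,
`G_k^{(4)} = U_k / (k + 1)`, and `f₄ = 1 + U₁ + 51/25 U₂ + 871/1000 U₃ + 128/125 U₄ + 21/200 U₉`.
So it suffices that `∑ᵢ ∑ⱼ U_k ⟪xᵢ, xⱼ⟫ ≥ 0` for points of `S³`.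

View `S³` as the unit quaternions, i.e. as `SU(2)` via `q ↦ [[z, w], [-w̄, z̄]]`, and let `ρ_k`
be its action on binary forms of degree `k` (the symmetric power of `ℂ²`). Every unit quaternion
`u` is conjugate to a unit complex number `z` with `Re z = Re u`, on which `ρ_k` is diagonal with
entries `zᵃ z̄ᵏ⁻ᵃ`, so `tr ρ_k(u) = U_k(Re u)`. Moreover `ρ_k` is unitary for the inner product
with binomial weights, whence `U_k(Re(p q̄)) = tr (D⁻¹ ρ_k(p) D ρ_k(q)ᴴ)` with
`D = diag (k choose a)`, and `∑ᵢ ∑ⱼ U_k(Re(qᵢ q̄ⱼ))` is a weighted squared Frobenius norm of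
`∑ᵢ ρ_k(qᵢ)`.
-/

open RealInnerProductSpace

/-- Musin's polynomial `f_4` for the kissing number problem in dimension 4. -/
noncomputable def f4 (t : ℝ) : ℝ :=
  (1344 / 25) * t ^ 9 - (2688 / 25) * t ^ 7 + (1764 / 25) * t ^ 5
    + (2048 / 125) * t ^ 4 - (1229 / 125) * t ^ 3 - (516 / 125) * t ^ 2
    - (217 / 500) * t - 2 / 125

open Polynomial Polynomial.Bivariate Quaternion Matrix

namespace Polynomial.Bivariate

variable {R : Type*} [CommSemiring R]

theorem coeff_coeff_swap (p : R[X][Y]) (i j : ℕ) :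
    ((swap p).coeff i).coeff j = (p.coeff j).coeff i := by
  induction p using Polynomial.induction_on' with
  | add p q hp hq => simp [hp, hq]
  | monomial n f =>
    induction f using Polynomial.induction_on' with
    | add f g hf hg => simp only [map_add, coeff_add, hf, hg]
    | monomial m r =>
      simp only [swap_monomial_monomial, coeff_monomial]
      split_ifs <;> simp_all [coeff_monomial]

end Polynomial.Bivariate

namespace Polynomial

variable {R A : Type*} [CommSemiring R] [CommSemiring A] [Algebra R A]

theorem aeval_homogenize (p : R[X]) (n : ℕ) (g : Fin 2 → A) :
    MvPolynomial.aeval g (p.homogenize n) =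
      ∑ b ∈ Finset.range (n + 1), algebraMap R A (p.coeff b) * g 0 ^ b * g 1 ^ (n - b) := by
  simp only [homogenize, Finset.Nat.sum_antidiagonal_eq_sum_range_succ_mk, map_sum,
    MvPolynomial.aeval_monomial]
  refine Finset.sum_congr rfl fun b _ ↦ ?_
  rw [Finsupp.update_eq_add_single, Finsupp.prod_add_index', Finsupp.prod_single_index,
    Finsupp.prod_single_index]
  · ring
  all_goals simp [pow_add]

theorem homogenize_pow {p : R[X]} {m : ℕ} (hp : p.natDegree ≤ m) (n : ℕ) :
    homogenize (p ^ n) (n * m) = homogenize p m ^ n := by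
  induction n with
  | zero => simp
  | succ n ih =>
    rw [pow_succ, add_one_mul, homogenize_mul _ _ (natDegree_pow_le_of_le n hp) hp, ih,
      pow_succ]

theorem homogenize_C_mul_X_add_C (a b : R) :
    homogenize (C a * X + C b) 1 = .C a * .X 0 + .C b * .X 1 := by
  simp [homogenize_C_mul, homogenize_X, homogenize_C]

end Polynomial

section SymPow

variable {R : Type*} [CommSemiring R]

noncomputable def symPowPoly (k : ℕ) (M : Matrix (Fin 2) (Fin 2) R) (a : ℕ) : R[X] :=
  (C (M 0 0) * X + C (M 1 0)) ^ a * (C (M 0 1) * X + C (M 1 1)) ^ (k - a)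

theorem homogenize_symPowPoly (k : ℕ) (M : Matrix (Fin 2) (Fin 2) R) {a : ℕ} (ha : a ≤ k) :
    homogenize (symPowPoly k M a) k =
      (.C (M 0 0) * .X 0 + .C (M 1 0) * .X 1) ^ a *
        (.C (M 0 1) * .X 0 + .C (M 1 1) * .X 1) ^ (k - a) := by
  have hk : k = a * 1 + (k - a) * 1 := by omega
  conv_lhs => arg 2; rw [hk]
  rw [symPowPoly, homogenize_mul _ _ (natDegree_pow_le_of_le _ natDegree_linear_le)
    (natDegree_pow_le_of_le _ natDegree_linear_le), homogenize_pow natDegree_linear_le,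
    homogenize_pow natDegree_linear_le, homogenize_C_mul_X_add_C, homogenize_C_mul_X_add_C]

/-- The matrix of the substitution `Z ↦ M₀₀ Z + M₁₀ W`, `W ↦ M₀₁ Z + M₁₁ W` on binary forms of
degree `k`, in the basis `Z ^ b * W ^ (k - b)`: column `a` is the image of `Z ^ a * W ^ (k - a)`,
dehomogenized at `W = 1`. -/
noncomputable def symPow (k : ℕ) (M : Matrix (Fin 2) (Fin 2) R) :
    Matrix (Fin (k + 1)) (Fin (k + 1)) R :=
  of fun b a ↦ (symPowPoly k M a).coeff b

theorem symPowPoly_mul (k : ℕ) (N M : Matrix (Fin 2) (Fin 2) R) (a : Fin (k + 1)) :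
    symPowPoly k (N * M) a = ∑ b : Fin (k + 1), C (symPow k M b a) * symPowPoly k N b := by
  have h := aeval_homogenize (symPowPoly k M a) k
    ![C (N 0 0) * X + C (N 1 0), C (N 0 1) * X + C (N 1 1)]
  rw [homogenize_symPowPoly k M a.is_le, ← Fin.sum_univ_eq_sum_range
    (fun b ↦ algebraMap R R[X] ((symPowPoly k M a).coeff b) * _ ^ b * _ ^ (k - b))] at h
  simp only [map_mul, map_pow, map_add, MvPolynomial.aeval_C, MvPolynomial.aeval_X,
    cons_val_zero, cons_val_one, algebraMap_eq] at h
  convert h using 1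
  · simp only [symPowPoly, mul_apply, Fin.sum_univ_two, map_add, map_mul]
    ring
  · simp only [symPow, of_apply, symPowPoly, mul_assoc]

theorem symPow_mul (k : ℕ) (N M : Matrix (Fin 2) (Fin 2) R) :
    symPow k (N * M) = symPow k N * symPow k M := by
  ext c a
  have h := congrArg (coeff · c) (symPowPoly_mul k N M a)
  simpa [symPow, mul_apply, finsetSum_coeff, coeff_C_mul, mul_comm] using h

theorem symPow_diagonal (k : ℕ) (α β : R) :
    symPow k (diagonal ![α, β]) =
      diagonal fun a : Fin (k + 1) ↦ α ^ (a : ℕ) * β ^ (k - a) := by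
  ext b a
  have : symPowPoly k (diagonal ![α, β]) a = C (α ^ (a : ℕ) * β ^ (k - a)) * X ^ (a : ℕ) := by
    simp only [symPowPoly, Fin.isValue, diagonal_apply_eq, cons_val_zero, ne_eq, one_ne_zero,
      not_false_eq_true, diagonal_apply_ne, map_zero, add_zero, mul_pow, zero_ne_one, zero_mul,
      cons_val_one, cons_val_fin_one, zero_add, C_mul, C_pow]
    ring
  simp only [symPow, of_apply, this, coeff_C_mul_X_pow, diagonal_apply, Fin.ext_iff]
  split_ifs with h <;> simp only [h]

theorem symPow_one (k : ℕ) : symPow k (1 : Matrix (Fin 2) (Fin 2) R) = 1 := by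
  have h := symPow_diagonal k (1 : R) 1
  simp only [one_pow, mul_one] at h
  rwa [← diagonal_one, ← diagonal_one, show (fun _ : Fin 2 ↦ (1 : R)) = ![1, 1] by
    ext i; fin_cases i <;> rfl]

theorem symPow_map {S : Type*} [CommSemiring S] (f : R →+* S) (k : ℕ)
    (M : Matrix (Fin 2) (Fin 2) R) :
    symPow k (M.map f) = (symPow k M).map f := by
  ext b a
  simp [symPow, symPowPoly, ← coeff_map, Polynomial.map_mul, Polynomial.map_pow]

/-- Its invariance under `X ↔ Y`, `M ↔ Mᵀ` (`swap_symPowGen`) is what relates `symPow k M` to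
`symPow k Mᵀ`. -/
noncomputable def symPowGen (k : ℕ) (M : Matrix (Fin 2) (Fin 2) R) : R[X][Y] :=
  (C (C (M 0 0) * X + C (M 1 0)) * Y + C (C (M 0 1) * X + C (M 1 1))) ^ k

theorem symPowGen_eq_sum (k : ℕ) (M : Matrix (Fin 2) (Fin 2) R) :
    symPowGen k M =
      ∑ a ∈ Finset.range (k + 1), C ((k.choose a : R[X]) * symPowPoly k M a) * Y ^ a := by
  rw [symPowGen, add_pow]
  refine Finset.sum_congr rfl fun a _ ↦ ?_
  simp only [symPowPoly, C_mul, C_pow, mul_pow, map_natCast]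
  ring

theorem swap_symPowGen (k : ℕ) (M : Matrix (Fin 2) (Fin 2) R) :
    Bivariate.swap (symPowGen k M) = symPowGen k Mᵀ := by
  simp only [symPowGen, map_pow, map_add, map_mul, swap_C, swap_Y, map_C, map_X, transpose_apply]
  ring

theorem choose_mul_symPow (k : ℕ) (M : Matrix (Fin 2) (Fin 2) R) (a b : Fin (k + 1)) :
    (k.choose a : R) * symPow k M b a = k.choose b * symPow k Mᵀ a b := by
  have h := coeff_coeff_swap (symPowGen k M) b a
  rw [swap_symPowGen, symPowGen_eq_sum, symPowGen_eq_sum] at h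
  simp only [finsetSum_coeff, coeff_C_mul_X_pow, Finset.sum_ite_eq, Finset.mem_range,
    Fin.is_lt, if_true, coeff_natCast_mul] at h
  simpa only [symPow, of_apply] using h.symm

theorem symPow_conjTranspose_mul_diagonal_choose [StarRing R] (k : ℕ)
    (M : Matrix (Fin 2) (Fin 2) R) :
    symPow k Mᴴ * diagonal (fun a : Fin (k + 1) ↦ (k.choose a : R)) =
      diagonal (fun a : Fin (k + 1) ↦ (k.choose a : R)) * (symPow k M)ᴴ := by
  ext b a
  rw [mul_diagonal, diagonal_mul, mul_comm, choose_mul_symPow, conjTranspose_transpose]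
  exact congrArg _ (congrFun (congrFun (symPow_map (starRingEnd R) k M) a) b)

end SymPow

theorem Polynomial.Chebyshev.U_eval_eq_sum_pow_mul_pow {R : Type*} [CommRing R] {α β t : R}
    (hαβ : α * β = 1) (ht : α + β = 2 * t) (k : ℕ) :
    (Chebyshev.U R k).eval t = ∑ a ∈ Finset.range (k + 1), α ^ a * β ^ (k - a) := by
  set s : ℕ → R := fun n ↦ ∑ a ∈ Finset.range (n + 1), α ^ a * β ^ (n - a) with hs
  have step (n : ℕ) : s (n + 1) = α ^ (n + 1) + β * s n := by
    simpa only [hs, Nat.add_sub_cancel] using geom_sum₂_succ_eq α β (n := n + 1)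
  show (Chebyshev.U R k).eval t = s k
  induction k using Nat.twoStepInduction with
  | zero => simp [hs]
  | one =>
    simp only [Nat.cast_one, U_one, eval_mul, eval_ofNat, eval_X, hs, Finset.sum_range_succ,
      tsub_self, pow_zero, mul_one, Finset.range_one, Finset.sum_singleton, tsub_zero, pow_one,
      one_mul]
    linear_combination -ht
  | more n ih₀ ih₁ =>
    push_cast at ih₁ ⊢
    rw [Chebyshev.U_add_two, eval_sub, eval_mul, eval_mul, eval_X, eval_ofNat, ih₀, ih₁]
    linear_combination -s (n + 1) * ht - step (n + 1) + α * step n + s n * hαβ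

noncomputable def quaternionToMatrix : ℍ[ℝ] →* Matrix (Fin 2) (Fin 2) ℂ where
  toFun q := !![⟨q.re, q.imI⟩, ⟨q.imJ, q.imK⟩; ⟨-q.imJ, q.imK⟩, ⟨q.re, -q.imI⟩]
  map_one' := by ext i j; fin_cases i <;> fin_cases j <;> apply Complex.ext <;> simp
  map_mul' p q := by
    ext i j
    fin_cases i <;> fin_cases j <;>
      · simp only [mul_apply, Fin.sum_univ_two]
        apply Complex.ext <;>
          simp only [Fin.zero_eta, Fin.mk_one, Fin.isValue, of_apply, cons_val', cons_val_zero,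
            cons_val_one, cons_val_fin_one, re_mul, imI_mul, imJ_mul, imK_mul, Complex.add_re,
            Complex.add_im, Complex.mul_re, Complex.mul_im] <;> ring

theorem quaternionToMatrix_star (q : ℍ[ℝ]) :
    quaternionToMatrix (star q) = (quaternionToMatrix q)ᴴ := by
  ext i j
  fin_cases i <;> fin_cases j <;> apply Complex.ext <;> simp [quaternionToMatrix]

theorem quaternionToMatrix_coeComplex (z : ℂ) :
    quaternionToMatrix z = diagonal ![z, starRingEnd ℂ z] := by
  ext i j
  fin_cases i <;> fin_cases j <;> apply Complex.ext <;> simp [quaternionToMatrix]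

theorem Quaternion.exists_mul_eq_mul_coeComplex (u : ℍ[ℝ]) :
    ∃ v : ℍ[ℝ], v ≠ 0 ∧ ∃ z : ℂ, z.re = u.re ∧ Complex.normSq z = normSq u ∧ u * v = v * z := by
  by_cases hJK : u.imJ = 0 ∧ u.imK = 0
  · refine ⟨1, one_ne_zero, ⟨u.re, u.imI⟩, rfl, ?_, ?_⟩
    · simp [Complex.normSq_apply, normSq_def', hJK, sq]
    · ext <;> simp [hJK]
  · set s := √(u.imI ^ 2 + u.imJ ^ 2 + u.imK ^ 2)
    have hs : s ^ 2 = u.imI ^ 2 + u.imJ ^ 2 + u.imK ^ 2 := Real.sq_sqrt (by positivity)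
    -- `v = |Im u| - (Im u) i` satisfies `(Im u) v = v (|Im u| i)`, as `(Im u)² = -|Im u|²`.
    set v : ℍ[ℝ] := ⟨s + u.imI, 0, -u.imK, u.imJ⟩
    refine ⟨v, fun h ↦ hJK ?_, ⟨u.re, s⟩, rfl, ?_, ?_⟩
    · have hJ := congrArg QuaternionAlgebra.imK h
      have hK := congrArg QuaternionAlgebra.imJ h
      simp only [imK_zero, imJ_zero, neg_eq_zero, v] at hJ hK
      exact ⟨hJ, hK⟩
    · simp only [Complex.normSq_apply, normSq_def']
      linear_combination hs
    · ext <;> simp only [re_mul, imI_mul, imJ_mul, imK_mul] <;>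
        simp only [v, re_coeComplex, imI_coeComplex, imJ_coeComplex, imK_coeComplex]
      · ring
      · linear_combination -hs
      · ring
      · ring

noncomputable def quaternionRep (k : ℕ) : ℍ[ℝ] →* Matrix (Fin (k + 1)) (Fin (k + 1)) ℂ where
  toFun q := symPow k (quaternionToMatrix q)
  map_one' := by rw [map_one, symPow_one]
  map_mul' p q := by rw [map_mul, symPow_mul]

theorem trace_quaternionRep {k : ℕ} {u : ℍ[ℝ]} (hu : normSq u = 1) :
    (quaternionRep k u).trace = (Chebyshev.U ℝ k).eval u.re := by
  obtain ⟨v, hv, z, hre, hnorm, huv⟩ := u.exists_mul_eq_mul_coeComplex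
  have hconj : u = v * z * v⁻¹ := by rw [← huv, mul_inv_cancel_right₀ hv]
  set V := Units.map (quaternionRep k) (Units.mk0 v hv)
  have hz : z * starRingEnd ℂ z = 1 := by
    rw [Complex.mul_conj, hnorm, hu, Complex.ofReal_one]
  calc (quaternionRep k u).trace
      = (↑V * quaternionRep k z * ↑V⁻¹ : Matrix (Fin (k + 1)) (Fin (k + 1)) ℂ).trace := by
        simp [V, hconj]
    _ = (quaternionRep k z).trace := trace_units_conj V _
    _ = (Chebyshev.U ℂ k).eval (z.re : ℂ) := by
        rw [Chebyshev.U_eval_eq_sum_pow_mul_pow hz (by rw [Complex.add_conj]; push_cast; ring),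
          ← Fin.sum_univ_eq_sum_range]
        simp [quaternionRep, quaternionToMatrix_coeComplex, symPow_diagonal, trace_diagonal]
    _ = (Chebyshev.U ℝ k).eval u.re := by
        rw [hre, ← Chebyshev.map_U Complex.ofRealHom, ← Complex.ofRealHom_eq_coe, eval_map_apply]
        rfl

theorem quaternionRep_star_mul_diagonal_choose (k : ℕ) (q : ℍ[ℝ]) :
    quaternionRep k (star q) * diagonal (fun a : Fin (k + 1) ↦ (k.choose a : ℂ)) =
      diagonal (fun a : Fin (k + 1) ↦ (k.choose a : ℂ)) * (quaternionRep k q)ᴴ := by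
  simp only [quaternionRep, MonoidHom.coe_mk, OneHom.coe_mk, quaternionToMatrix_star,
    symPow_conjTranspose_mul_diagonal_choose]

theorem re_trace_diagonal_inv_mul_mul_diagonal_mul_conjTranspose_nonneg {n : Type*} [Fintype n]
    [DecidableEq n] {d : n → ℝ} (hd : ∀ i, 0 < d i) (Z : Matrix n n ℂ) :
    0 ≤ (diagonal (fun i ↦ ((d i : ℂ))⁻¹) * Z * diagonal (fun i ↦ (d i : ℂ)) * Zᴴ).trace.re := by
  have entry (i j : n) : (diagonal (fun i ↦ ((d i : ℂ))⁻¹) * Z * diagonal (fun i ↦ (d i : ℂ))) i j =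
      ((d i : ℂ))⁻¹ * Z i j * d j := by
    rw [mul_diagonal, diagonal_mul]
  simp only [trace, diag, mul_apply (N := Zᴴ), entry, conjTranspose_apply, Complex.re_sum]
  refine Finset.sum_nonneg fun i _ ↦ Finset.sum_nonneg fun j _ ↦ ?_
  have : ((d i : ℂ))⁻¹ * Z i j * d j * star (Z i j) =
      ((d j / d i * Complex.normSq (Z i j) : ℝ) : ℂ) := by
    rw [Complex.ofReal_mul, ← Complex.mul_conj, Complex.star_def]
    push_cast
    ring
  rw [this, Complex.ofReal_re]
  exact mul_nonneg (div_nonneg (hd j).le (hd i).le) (Complex.normSq_nonneg _)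

theorem trace_quaternionRep_mul_star (k : ℕ) (p q : ℍ[ℝ]) :
    (quaternionRep k (p * star q)).trace =
      (diagonal (fun a : Fin (k + 1) ↦ ((k.choose a : ℝ) : ℂ)⁻¹) * quaternionRep k p *
        diagonal (fun a : Fin (k + 1) ↦ ((k.choose a : ℝ) : ℂ)) * (quaternionRep k q)ᴴ).trace := by
  set D := diagonal (fun a : Fin (k + 1) ↦ (k.choose a : ℂ))
  have hD : D * diagonal (fun a : Fin (k + 1) ↦ ((k.choose a : ℝ) : ℂ)⁻¹) = 1 := by
    rw [diagonal_mul_diagonal, ← diagonal_one]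
    congr 1
    ext a
    exact mul_inv_cancel₀ (by exact_mod_cast (Nat.choose_pos a.is_le).ne')
  calc (quaternionRep k (p * star q)).trace
      = (quaternionRep k p * (quaternionRep k (star q) * D) *
          diagonal (fun a : Fin (k + 1) ↦ ((k.choose a : ℝ) : ℂ)⁻¹)).trace := by
        rw [map_mul, Matrix.mul_assoc, Matrix.mul_assoc, hD, Matrix.mul_one]
    _ = _ := by
        rw [quaternionRep_star_mul_diagonal_choose, trace_mul_comm, ← Matrix.mul_assoc,
          ← Matrix.mul_assoc]
        simp only [Complex.ofReal_natCast]

theorem sum_sum_U_eval_re_mul_star_nonneg (k : ℕ) {ι : Type*} [Fintype ι] (q : ι → ℍ[ℝ])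
    (hq : ∀ i, normSq (q i) = 1) :
    0 ≤ ∑ i, ∑ j, (Chebyshev.U ℝ k).eval (q i * star (q j)).re := by
  set Z := ∑ i, quaternionRep k (q i)
  have hsum : ((∑ i, ∑ j, (Chebyshev.U ℝ k).eval (q i * star (q j)).re : ℝ) : ℂ) =
      (diagonal (fun a : Fin (k + 1) ↦ ((k.choose a : ℝ) : ℂ)⁻¹) * Z *
        diagonal (fun a : Fin (k + 1) ↦ ((k.choose a : ℝ) : ℂ)) * Zᴴ).trace := by
    have hunit (i j : ι) : normSq (q i * star (q j)) = 1 := by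
      rw [map_mul, normSq_star, hq, hq, one_mul]
    simp only [Complex.ofReal_sum, ← trace_quaternionRep (hunit _ _), trace_quaternionRep_mul_star,
      Z, conjTranspose_sum, Matrix.mul_sum, Matrix.sum_mul, trace_sum]
    exact Finset.sum_comm
  have := re_trace_diagonal_inv_mul_mul_diagonal_mul_conjTranspose_nonneg
    (fun a : Fin (k + 1) ↦ Nat.cast_pos.mpr (Nat.choose_pos a.is_le)) Z
  rwa [← hsum, Complex.ofReal_re] at this

theorem sum_sum_U_eval_inner_nonneg (k : ℕ) {ι : Type*} [Fintype ι]
    (x : ι → EuclideanSpace ℝ (Fin 4)) (hx : ∀ i, ‖x i‖ = 1) :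
    0 ≤ ∑ i, ∑ j, (Chebyshev.U ℝ k).eval ⟪x i, x j⟫ := by
  set e := Quaternion.linearIsometryEquivTuple.symm
  have hq (i : ι) : normSq (e (x i)) = 1 := by
    rw [normSq_eq_norm_mul_self, e.norm_map, hx, one_mul]
  simpa only [← inner_def, e.inner_map_map] using sum_sum_U_eval_re_mul_star_nonneg k _ hq

theorem mul_sq_le_sum_sum_of_eq_add_sum_U {ι n : Type*} [Fintype ι] [Fintype n] {f : ℝ → ℝ}
    {c₀ : ℝ} {c : n → ℝ} {deg : n → ℕ} (hc : ∀ m, 0 ≤ c m)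
    (hf : ∀ t, f t = c₀ + ∑ m, c m * (Chebyshev.U ℝ (deg m)).eval t)
    (x : ι → EuclideanSpace ℝ (Fin 4)) (hx : ∀ i, ‖x i‖ = 1) :
    c₀ * Fintype.card ι ^ 2 ≤ ∑ i, ∑ j, f ⟪x i, x j⟫ := by
  have hsum : ∑ i, ∑ j, f ⟪x i, x j⟫ = c₀ * Fintype.card ι ^ 2 +
      ∑ m, c m * ∑ i, ∑ j, (Chebyshev.U ℝ (deg m)).eval ⟪x i, x j⟫ := by
    simp only [hf, Finset.sum_add_distrib, Finset.sum_const, Finset.card_univ, nsmul_eq_mul,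
      Finset.mul_sum]
    rw [Finset.sum_congr rfl fun i _ ↦ Finset.sum_comm, Finset.sum_comm]
    ring
  rw [hsum]
  exact le_add_of_nonneg_right (Finset.sum_nonneg fun m _ ↦
    mul_nonneg (hc m) (sum_sum_U_eval_inner_nonneg _ x hx))

theorem f4_eq_one_add_sum_U (t : ℝ) :
    f4 t = 1 + ∑ m : Fin 5, ![1, 51 / 25, 871 / 1000, 128 / 125, 21 / 200] m *
      (Chebyshev.U ℝ (![1, 2, 3, 4, 9] m : ℕ)).eval t := by
  simp only [f4, Fin.sum_univ_five, Fin.isValue, cons_val_zero, cons_val_one, cons_val,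
    Nat.cast_one, Nat.cast_ofNat, one_mul, eval_mul, eval_ofNat, eval_X, eval_sub, eval_pow,
    eval_one, Int.reduceSub, Chebyshev.U_one, Chebyshev.U_two, Chebyshev.U_eq ℝ 3,
    Chebyshev.U_eq ℝ 4, Chebyshev.U_eq ℝ 5, Chebyshev.U_eq ℝ 6, Chebyshev.U_eq ℝ 7,
    Chebyshev.U_eq ℝ 8, Chebyshev.U_eq ℝ 9]
  ring

/-- For any finite set of points `x_1, …, x_M` on the unit sphere `S³ ⊂ ℝ⁴`,
`S(X) = ∑_{i,j} f_4(⟨x_i,x_j⟩) ≥ M²`. -/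
theorem f4_sum_ge_sq (M : ℕ) (x : Fin M → EuclideanSpace ℝ (Fin 4))
    (hx : ∀ i, ‖x i‖ = 1) :
    (M : ℝ) ^ 2 ≤ ∑ i, ∑ j, f4 ⟪x i, x j⟫ := by
  have hc : ∀ m : Fin 5, (0 : ℝ) ≤ ![1, 51 / 25, 871 / 1000, 128 / 125, 21 / 200] m := by
    intro m; fin_cases m <;> norm_num
  simpa using mul_sq_le_sum_sum_of_eq_add_sum_U hc f4_eq_one_add_sum_U x hx
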